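/- Let u* ≠ 0 be the max-margin direction for a linearly separable dataset (vⱼ, yⱼ). For the GNN trained on r-regular graphs (so its effective classifier on a graph with degrees deg(i) is g(X,A) = (1/(1+r²))·(u*·Σᵢxᵢ + r·u*·Σᵢ deg(i)xᵢ)), there exists a graph G on n ≥ 2 nodes whose feature sum v satisfies sign(u*·v) = +1 but g(G) < 0. -/

import Mathlib

/-!
Take every feature to be a multiple `cᵢ • u*` of the teacher direction, so that both sums in the
classifier are multiples of `u* ⬝ᵥ u* > 0`. On three nodes with the single edge `0 — 1`, the
choice `c = (-1, 0, 1 + r/2)` puts the negative feature on a node of degree one and isolates the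
positive one: the plain sum is `(r/2) • u*`, while the degree-weighted sum is `-u*`, so the
classifier evaluates to `(1 + r²)⁻¹ (r/2 - r) (u* ⬝ᵥ u*) < 0`.
-/

open Matrix

namespace SimpleGraph

variable {V : Type*} {s t : V}

theorem degree_edge_left (h : s ≠ t) [Fintype ((edge s t).neighborSet s)] :
    (edge s t).degree s = 1 :=
  degree_eq_one_iff_existsUnique_adj.mpr ⟨t, by simp [edge_adj, h], by simp_all [edge_adj]⟩

theorem degree_edge_of_ne {v : V} (hs : v ≠ s) (ht : v ≠ t)
    [Fintype ((edge s t).neighborSet v)] : (edge s t).degree v = 0 :=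
  (degree_eq_zero _ v).mpr fun w hw => by simp_all [edge_adj]

end SimpleGraph

theorem dotProduct_sum_smul_self {ι n R : Type*} [Fintype n] [CommSemiring R] (s : Finset ι)
    (c : ι → R) (u : n → R) : u ⬝ᵥ ∑ i ∈ s, c i • u = (∑ i ∈ s, c i) * (u ⬝ᵥ u) := by
  simp only [dotProduct_sum, dotProduct_smul, smul_eq_mul, Finset.sum_mul]

open scoped Classical in
theorem extrapolation_failure_construction_general {d : ℕ} (r : ℝ) (hr : 0 < r)
    (ustar : Fin d → ℝ) (hu0 : ustar ≠ 0) :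
    ∃ (n : ℕ) (x : Fin n → Fin d → ℝ) (G : SimpleGraph (Fin n)),
      2 ≤ n ∧
      Real.sign (ustar ⬝ᵥ ∑ i, x i) = 1 ∧
      (1 + r ^ 2)⁻¹ *
        (ustar ⬝ᵥ (∑ i, x i) + r * (ustar ⬝ᵥ ∑ i, (G.degree i : ℝ) • x i)) < 0 := by
  have hu : 0 < ustar ⬝ᵥ ustar := by simpa using dotProduct_self_star_pos_iff.mpr hu0
  set c : Fin 3 → ℝ := ![-1, 0, 1 + r / 2]
  set x : Fin 3 → Fin d → ℝ := fun i => c i • ustar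
  have hsum : ustar ⬝ᵥ ∑ i, x i = r / 2 * (ustar ⬝ᵥ ustar) := by
    rw [dotProduct_sum_smul_self, Fin.sum_univ_three]
    simp [c]
  refine ⟨3, x, SimpleGraph.edge 0 1, by norm_num,
    by rw [hsum]; exact Real.sign_of_pos (by positivity), ?_⟩
  simp only [hsum, x, smul_smul]
  rw [dotProduct_sum_smul_self]
  simp only [Fin.sum_univ_three, ne_eq, zero_ne_one, not_false_eq_true,
    SimpleGraph.degree_edge_left, Nat.cast_one, cons_val_zero, mul_neg, mul_one, cons_val_one,
    mul_zero, add_zero, Fin.reduceEq, SimpleGraph.degree_edge_of_ne, CharP.cast_eq_zero, zero_mul, c]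
  have hru : 0 < r * (ustar ⬝ᵥ ustar) := mul_pos hr hu
  exact mul_neg_of_pos_of_neg (by positivity) (by linarith)

open scoped Classical in
/-- Construction witnessing failure of extrapolation: a graph whose feature sum
is classified `+1` by the teacher `ustar` but on which the trained GNN's output
is negative. -/
theorem extrapolation_failure_construction {d m : ℕ} (r : ℝ) (hr : 0 < r)
    (v : Fin m → Fin d → ℝ) (y : Fin m → ℝ)
    (hy : ∀ j, y j = 1 ∨ y j = -1)
    (ustar : Fin d → ℝ) (hu0 : ustar ≠ 0)
    (hufeas : ∀ j, y j * (ustar ⬝ᵥ v j) ≥ 1)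
    (huopt : ∀ u : Fin d → ℝ, (∀ j, y j * (u ⬝ᵥ v j) ≥ 1) →
      ustar ⬝ᵥ ustar ≤ u ⬝ᵥ u) :
    ∃ (n : ℕ) (x : Fin n → Fin d → ℝ) (G : SimpleGraph (Fin n)),
      2 ≤ n ∧
      Real.sign (ustar ⬝ᵥ ∑ i, x i) = 1 ∧
      (1 + r ^ 2)⁻¹ *
        (ustar ⬝ᵥ (∑ i, x i) + r * (ustar ⬝ᵥ ∑ i, (G.degree i : ℝ) • x i)) < 0 :=
  extrapolation_failure_construction_general r hr ustar hu0
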